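/- Let u(x) = (|x| - a)²/2 on Ω = {a ≤ |x| ≤ b} with 0 < a < b, and define f(s) = -2 + a/(a + √(2s)) for s ∈ [0, (b-a)²/2]. Then f is continuous on [0, (b-a)²/2] and Δu + f(u) = 0 holds at every point of Ω. -/

import Mathlib

noncomputable section

abbrev Pt := EuclideanSpace ℝ (Fin 2)

def pd (i : Fin 2) (f : Pt → ℝ) (x : Pt) : ℝ := fderiv ℝ f x (EuclideanSpace.single i 1)

/-- The stream function u(x) = (|x| - a)²/2. -/
def uex (a : ℝ) (x : Pt) : ℝ := (‖x‖ - a) ^ 2 / 2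

/-- The nonlinearity f(s) = -2 + a/(a + √(2s)). -/
def fex (a : ℝ) (s : ℝ) : ℝ := -2 + a / (a + Real.sqrt (2 * s))

lemma hasFDerivAt_norm' (x : Pt) (hx : x ≠ 0) :
    HasFDerivAt (fun y : Pt => ‖y‖) (‖x‖⁻¹ • innerSL ℝ x) x := by
  have h1 : HasFDerivAt (fun y : Pt => ‖y‖ ^ 2) (2 • innerSL ℝ x) x :=
    (hasStrictFDerivAt_norm_sq x).hasFDerivAt
  have hx2 : (0:ℝ) < ‖x‖ ^ 2 := by have := norm_pos_iff.mpr hx; positivity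
  have h2 : HasDerivAt Real.sqrt (1 / (2 * Real.sqrt (‖x‖ ^ 2))) (‖x‖ ^ 2) :=
    Real.hasDerivAt_sqrt hx2.ne'
  have h3 := h2.comp_hasFDerivAt x h1
  have : (fun y : Pt => Real.sqrt (‖y‖ ^ 2)) = fun y : Pt => ‖y‖ := by
    funext y; rw [Real.sqrt_sq (norm_nonneg y)]
  rw [show (Real.sqrt ∘ fun y : Pt => ‖y‖ ^ 2) = fun y : Pt => ‖y‖ from this ▸ rfl] at h3
  refine h3.congr_fderiv ?_
  rw [Real.sqrt_sq (norm_nonneg x)]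
  ext v
  simp [smul_smul]
  ring_nf

lemma hasFDerivAt_uex (a : ℝ) (x : Pt) (hx : x ≠ 0) :
    HasFDerivAt (uex a) ((‖x‖ - a) • (‖x‖⁻¹ • innerSL ℝ x)) x := by
  have h1 : HasDerivAt (fun t : ℝ => (t - a) ^ 2 / 2) (‖x‖ - a) ‖x‖ := by
    have := (((hasDerivAt_id (‖x‖)).sub_const a).pow 2).div_const 2
    simpa using this
  exact h1.comp_hasFDerivAt x (hasFDerivAt_norm' x hx)

lemma pd_uex (a : ℝ) (i : Fin 2) (y : Pt) (hy : y ≠ 0) :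
    pd i (uex a) y = (1 - a / ‖y‖) * y i := by
  have h := (hasFDerivAt_uex a y hy).fderiv
  have hn : ‖y‖ ≠ 0 := norm_ne_zero_iff.mpr hy
  rw [pd, h]
  have hi : (innerSL ℝ) y (EuclideanSpace.single i 1) = y i := by
    rw [innerSL_apply_apply, EuclideanSpace.inner_single_right]; simp
  simp only [ContinuousLinearMap.smul_apply, smul_eq_mul, hi]
  field_simp

lemma pd2 (a : ℝ) (i : Fin 2) (x : Pt) (hx : x ≠ 0) :
    pd i (pd i (uex a)) x = (1 - a / ‖x‖) + x i * (a / ‖x‖ ^ 2 * (‖x‖⁻¹ * x i)) := by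
  have hn : ‖x‖ ≠ 0 := norm_ne_zero_iff.mpr hx
  have hev : pd i (uex a) =ᶠ[nhds x] fun y => (1 - a / ‖y‖) * y i := by
    filter_upwards [IsOpen.mem_nhds isOpen_compl_singleton hx] with y hy
    exact pd_uex a i y hy
  have hsc : HasDerivAt (fun t : ℝ => 1 - a / t) (a / ‖x‖ ^ 2) ‖x‖ := by
    have h0 := ((hasDerivAt_inv hn).const_mul a).const_sub 1
    have : (fun t : ℝ => 1 - a * t⁻¹) = fun t : ℝ => 1 - a / t := by
      funext t; rw [div_eq_mul_inv]
    rw [this] at h0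
    refine h0.congr_deriv ?_
    ring
  have Hc : HasFDerivAt (fun y : Pt => 1 - a / ‖y‖)
      ((a / ‖x‖ ^ 2) • (‖x‖⁻¹ • innerSL ℝ x)) x :=
    hsc.comp_hasFDerivAt x (hasFDerivAt_norm' x hx)
  have Hp : HasFDerivAt (fun y : Pt => y i) (EuclideanSpace.proj i : Pt →L[ℝ] ℝ) x :=
    (EuclideanSpace.proj i : Pt →L[ℝ] ℝ).hasFDerivAt
  have Hg : HasFDerivAt (fun y : Pt => (1 - a / ‖y‖) * y i) _ x := Hc.mul Hp
  rw [pd, hev.fderiv_eq, Hg.fderiv]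
  have hi : (innerSL ℝ) x (EuclideanSpace.single i 1) = x i := by
    rw [innerSL_apply_apply, EuclideanSpace.inner_single_right]; simp
  have hpr : (EuclideanSpace.proj i : Pt →L[ℝ] ℝ) (EuclideanSpace.single i 1) = 1 := by
    simp
  simp only [ContinuousLinearMap.add_apply, ContinuousLinearMap.smul_apply, smul_eq_mul, hi, hpr]
  ring

theorem stmt3 (a b : ℝ) (ha : 0 < a) (hab : a < b) :
    ContinuousOn (fex a) (Set.Icc 0 ((b - a) ^ 2 / 2)) ∧
    ∀ x : Pt, a ≤ ‖x‖ → ‖x‖ ≤ b →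
      pd 0 (pd 0 (uex a)) x + pd 1 (pd 1 (uex a)) x + fex a (uex a x) = 0 := by
  constructor
  · apply Continuous.continuousOn
    unfold fex
    apply continuous_const.add
    apply continuous_const.div
    · exact continuous_const.add (Real.continuous_sqrt.comp (continuous_const.mul continuous_id))
    · intro s
      have := Real.sqrt_nonneg (2 * s)
      positivity
  · intro x hax hxb
    have hr : (0:ℝ) < ‖x‖ := lt_of_lt_of_le ha hax
    have hx : x ≠ 0 := by
      intro h; rw [h] at hr; simp at hr
    have hn : ‖x‖ ≠ 0 := hr.ne'
    have hfex : fex a (uex a x) = -2 + a / ‖x‖ := by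
      have h1 : 2 * uex a x = (‖x‖ - a) ^ 2 := by rw [uex]; ring
      rw [fex, h1, Real.sqrt_sq (by linarith)]
      ring_nf
    have hr2 : x 0 ^ 2 + x 1 ^ 2 = ‖x‖ ^ 2 := by
      have h2 : ‖x‖ ^ 2 = ∑ i : Fin 2, ‖x i‖ ^ 2 := by
        rw [EuclideanSpace.norm_eq, Real.sq_sqrt (by positivity)]
      rw [h2, Fin.sum_univ_two]
      simp [Real.norm_eq_abs, sq_abs]
    rw [pd2 a 0 x hx, pd2 a 1 x hx, hfex]
    have key : x 0 * (a / ‖x‖ ^ 2 * (‖x‖⁻¹ * x 0)) + x 1 * (a / ‖x‖ ^ 2 * (‖x‖⁻¹ * x 1))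
        = a / ‖x‖ := by
      have h3 : x 0 * (a / ‖x‖ ^ 2 * (‖x‖⁻¹ * x 0)) + x 1 * (a / ‖x‖ ^ 2 * (‖x‖⁻¹ * x 1))
          = a / ‖x‖ ^ 2 * ‖x‖⁻¹ * (x 0 ^ 2 + x 1 ^ 2) := by ring
      rw [h3, hr2]
      field_simp
    linarith [key]
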